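/- Let y ∈ ℂ⁶ ∖ {0} with Σ_k y_k = 0 and (Σ_k y_k²)² = 4 Σ_k y_k⁴, and suppose there is exactly one node [ε^{A₀}] among the 10 nodes with Σ_k ε^{A₀}_k y_k = 0. Then the cubic surface Σ₃ ∩ H_y has exactly one singular point, namely the node [ε^{A₀}]. -/
import Mathlib


open scoped BigOperators

/-- The vector `ε^A` with coordinate `1` on `A` and `-1` off `A`. -/
noncomputable def eps (A : Finset (Fin 6)) : Fin 6 → ℂ := fun k => if k ∈ A then 1 else -1

lemma eps_ne_zero (A : Finset (Fin 6)) : eps A ≠ 0 := by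
  intro h
  have h0 := congrFun h 0
  simp only [eps, Pi.zero_apply] at h0
  split at h0
  · exact one_ne_zero h0
  · exact (neg_ne_zero.mpr (one_ne_zero (α := ℂ))) h0

/-- `p` is a singular point of the cubic surface `Σ₃ ∩ H_y` (Jacobian criterion). -/
def SingOnSection (y : Fin 6 → ℂ) (p : Projectivization ℂ (Fin 6 → ℂ)) : Prop :=
  ∃ (x : Fin 6 → ℂ) (hx : x ≠ 0), p = Projectivization.mk ℂ x hx ∧
    (∑ k, x k) = 0 ∧ (∑ k, (x k) ^ 3) = 0 ∧ (∑ k, y k * x k) = 0 ∧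
    ¬ LinearIndependent ℂ ![(1 : Fin 6 → ℂ), fun k => (x k) ^ 2, y]

lemma sum_triple {a b c : Fin 6} (hab : a ≠ b) (hac : a ≠ c) (hbc : b ≠ c) (g : Fin 6 → ℂ) :
    ∑ k ∈ ({a, b, c} : Finset (Fin 6)), g k = g a + g b + g c := by
  rw [Finset.sum_insert (by simp [hab, hac]), Finset.sum_insert (by simp [hbc]),
    Finset.sum_singleton, add_assoc]

lemma eps_mul_sum (A : Finset (Fin 6)) (g : Fin 6 → ℂ) :
    ∑ k, eps A k * g k = ∑ k ∈ A, g k - ∑ k ∈ Aᶜ, g k := by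
  rw [← Finset.sum_add_sum_compl A (fun k => eps A k * g k)]
  have h1 : ∑ k ∈ A, eps A k * g k = ∑ k ∈ A, g k :=
    Finset.sum_congr rfl fun k hk => by simp [eps, hk]
  have h2 : ∑ k ∈ Aᶜ, eps A k * g k = -∑ k ∈ Aᶜ, g k := by
    rw [← Finset.sum_neg_distrib]
    exact Finset.sum_congr rfl fun k hk => by
      simp only [Finset.mem_compl] at hk; simp [eps, hk]
  rw [h1, h2]; ring

lemma eps_sum_eq (A : Finset (Fin 6)) (g : Fin 6 → ℂ) :
    ∑ k, eps A k * g k = 2 * ∑ k ∈ A, g k - ∑ k, g k := by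
  rw [eps_mul_sum]
  have h := Finset.sum_add_sum_compl A g
  linear_combination -h

lemma sum_eps (A : Finset (Fin 6)) : ∑ k, eps A k = 2 * (A.card : ℂ) - 6 := by
  have h := eps_sum_eq A (fun _ => (1 : ℂ))
  simp only [mul_one, Finset.sum_const, smul_eq_mul, Finset.card_univ, Fintype.card_fin] at h
  simpa using h

lemma key_cubic (a b c d e f : ℂ) (h1 : a + b + c + d + e + f = 0)
    (h3 : a ^ 3 + b ^ 3 + c ^ 3 + d ^ 3 + e ^ 3 + f ^ 3 = 0)
    (h2 : a ^ 2 + b ^ 2 + c ^ 2 = d ^ 2 + e ^ 2 + f ^ 2) :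
    (a + d) * (a + e) * (a + f) = 0 := by
  have hQ : d * e + d * f + e * f = a * b + a * c + b * c := by
    linear_combination ((d + e + f - a - b - c) / 2) * h1 + (1 / 2) * h2
  have hP : d * e * f = -(a * b * c) := by
    linear_combination (1 / 3) * h3 +
      ((3 * (a * b + a * c + b * c) -
        ((d + e + f) ^ 2 - (d + e + f) * (a + b + c) + (a + b + c) ^ 2)) / 3) * h1 +
      (d + e + f) * hQ
  linear_combination a ^ 2 * h1 + a * hQ + hP

lemma eps_compl (A : Finset (Fin 6)) : eps Aᶜ = -eps A := by
  funext k
  by_cases h : k ∈ A <;> simp [eps, h]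

/-- if `[y]` lies on the Castelnuovo–Richmond quartic and exactly one node
`[ε^{A₀}]` of the Segre cubic satisfies `∑ ε^{A₀}_k y_k = 0`, then the cubic surface
`Σ₃ ∩ H_y` has exactly one singular point, namely the node `[ε^{A₀}]`. -/
theorem tangent_section_through_one_node (y : Fin 6 → ℂ) (hy : y ≠ 0)
    (hsum : (∑ k, y k) = 0)
    (hcr : (∑ k, (y k) ^ 2) ^ 2 = 4 * (∑ k, (y k) ^ 4))
    (A₀ : Finset (Fin 6)) (hA₀ : A₀.card = 3) (hA₀y : (∑ k, eps A₀ k * y k) = 0)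
    (huniq : ∀ A : Finset (Fin 6), A.card = 3 → (∑ k, eps A k * y k) = 0 →
      A = A₀ ∨ A = A₀ᶜ) :
    ∀ p : Projectivization ℂ (Fin 6 → ℂ),
      SingOnSection y p ↔ p = Projectivization.mk ℂ (eps A₀) (eps_ne_zero A₀) := by
  intro p
  constructor
  · rintro ⟨x, hx, hp, hs1, hs3, hyx, hdep⟩
    rw [Fintype.not_linearIndependent_iff] at hdep
    obtain ⟨g, hg, i, hgi⟩ := hdep
    rw [Fin.sum_univ_three] at hg
    simp only [Matrix.cons_val_zero, Matrix.cons_val_one, Matrix.head_cons,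
      Matrix.cons_val_two, Matrix.tail_cons] at hg
    have hpt : ∀ k, g 0 + g 1 * (x k) ^ 2 + g 2 * y k = 0 := by
      intro k
      have h := congrFun hg k
      simpa [mul_comm] using h
    by_cases hg2 : g 2 = 0
    · -- x² is constant, so x is a multiple of some eps A
      have hg1 : g 1 ≠ 0 := by
        intro h1
        have h0 : g 0 = 0 := by have := hpt 0; rw [h1, hg2] at this; simpa using this
        fin_cases i <;> simp_all
      have hsq : ∀ k, (x k) ^ 2 = (x 0) ^ 2 := by
        intro k
        have hk := hpt k
        have h0 := hpt 0
        rw [hg2] at hk h0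
        have : g 1 * (x k) ^ 2 = g 1 * (x 0) ^ 2 := by linear_combination hk - h0
        exact mul_left_cancel₀ hg1 this
      set t := x 0 with ht
      have htne : t ≠ 0 := by
        intro h0
        apply hx
        funext k
        have hk : x k ^ 2 = 0 := by rw [hsq k, h0]; ring
        simp only [Pi.zero_apply]
        exact sq_eq_zero_iff.1 hk
      have hxk : ∀ k, x k = t ∨ x k = -t := by
        intro k
        have h : (x k - t) * (x k + t) = 0 := by linear_combination hsq k
        rcases mul_eq_zero.1 h with h | h
        · exact Or.inl (by linear_combination h)
        · exact Or.inr (by linear_combination h)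
      set A : Finset (Fin 6) := Finset.univ.filter (fun k => x k = t) with hAdef
      have hxA : x = t • eps A := by
        funext k
        simp only [Pi.smul_apply, smul_eq_mul, eps, hAdef, Finset.mem_filter,
          Finset.mem_univ, true_and]
        by_cases hk : x k = t
        · rw [if_pos hk, hk, mul_one]
        · rw [if_neg hk]
          rcases hxk k with h | h
          · exact absurd h hk
          · rw [h]; ring
      have hsum_eps : ∑ k, eps A k = 2 * (A.card : ℂ) - 6 := sum_eps A
      have hcardA : A.card = 3 := by
        have h : t * (2 * (A.card : ℂ) - 6) = 0 := by
          rw [← hsum_eps, Finset.mul_sum, ← hs1]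
          exact Finset.sum_congr rfl fun k _ => by
            rw [hxA]; simp only [Pi.smul_apply, smul_eq_mul]
        rcases mul_eq_zero.1 h with h | h
        · exact absurd h htne
        · have h3 : (A.card : ℂ) = ((3 : ℕ) : ℂ) := by push_cast; linear_combination h / 2
          exact_mod_cast h3
      have hepsy : ∑ k, eps A k * y k = 0 := by
        have h : t * ∑ k, eps A k * y k = 0 := by
          rw [Finset.mul_sum, ← hyx]
          exact Finset.sum_congr rfl fun k _ => by
            rw [hxA]; simp only [Pi.smul_apply, smul_eq_mul]; ring
        rcases mul_eq_zero.1 h with h | h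
        · exact absurd h htne
        · exact h
      rcases huniq A hcardA hepsy with hA0 | hAc
      · rw [hp, Projectivization.mk_eq_mk_iff]
        refine ⟨Units.mk0 t htne, ?_⟩
        rw [hxA, hA0]
        funext k
        simp only [Units.smul_def, Units.val_mk0, Pi.smul_apply, smul_eq_mul]
      · rw [hp, Projectivization.mk_eq_mk_iff]
        refine ⟨Units.mk0 (-t) (neg_ne_zero.mpr htne), ?_⟩
        rw [hxA, hAc, eps_compl]
        funext k
        simp only [Units.smul_def, Units.val_mk0, Pi.smul_apply, Pi.neg_apply, smul_eq_mul]
        ring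
    · -- tangency case: derive a contradiction with huniq
      exfalso
      obtain ⟨a, b, c, hab, hac, hbc, hA₀e⟩ := Finset.card_eq_three.1 hA₀
      have hccard : A₀ᶜ.card = 3 := by
        rw [Finset.card_compl, hA₀]; rfl
      obtain ⟨d, e, f, hde, hdf, hef, hAce⟩ := Finset.card_eq_three.1 hccard
      have hsplit : ∀ g : Fin 6 → ℂ, ∑ k, g k = (g a + g b + g c) + (g d + g e + g f) := by
        intro g
        rw [← Finset.sum_add_sum_compl A₀ g, hAce, hA₀e,
          sum_triple hab hac hbc, sum_triple hde hdf hef]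
      have hmemA : a ∈ A₀ ∧ b ∈ A₀ ∧ c ∈ A₀ := by rw [hA₀e]; simp
      have hmemC : d ∈ A₀ᶜ ∧ e ∈ A₀ᶜ ∧ f ∈ A₀ᶜ := by rw [hAce]; simp
      have hg1 : g 1 ≠ 0 := by
        intro h1
        apply hy
        have hyk : ∀ k, y k = y 0 := by
          intro k
          have hk := hpt k
          have h0 := hpt 0
          rw [h1] at hk h0
          have : g 2 * y k = g 2 * y 0 := by linear_combination hk - h0
          exact mul_left_cancel₀ hg2 this
        have h6 : (6 : ℂ) * y 0 = 0 := by
          rw [← hsum]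
          rw [Finset.sum_congr rfl fun k _ => hyk k]
          simp
        have hy0 : y 0 = 0 := by
          rcases mul_eq_zero.1 h6 with h | h
          · norm_num at h
          · exact h
        funext k
        rw [hyk k, hy0]; rfl
      -- triple sum of y over A₀ is zero
      have htriy : y a + y b + y c = 0 := by
        have h := eps_sum_eq A₀ y
        rw [hA₀y, hsum, hA₀e, sum_triple hab hac hbc] at h
        linear_combination -h / 2
      -- squares sums are equal
      have hsq : (x a) ^ 2 + (x b) ^ 2 + (x c) ^ 2 = (x d) ^ 2 + (x e) ^ 2 + (x f) ^ 2 := by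
        have hA : g 0 * 3 + g 1 * ((x a) ^ 2 + (x b) ^ 2 + (x c) ^ 2) +
            g 2 * (y a + y b + y c) = 0 := by
          linear_combination hpt a + hpt b + hpt c
        have hC : g 0 * 3 + g 1 * ((x d) ^ 2 + (x e) ^ 2 + (x f) ^ 2) +
            g 2 * (y d + y e + y f) = 0 := by
          linear_combination hpt d + hpt e + hpt f
        have htriy' : y d + y e + y f = 0 := by
          have h := hsplit y
          rw [hsum] at h
          linear_combination -h - htriy
        have h : g 1 * ((x a) ^ 2 + (x b) ^ 2 + (x c) ^ 2) =
            g 1 * ((x d) ^ 2 + (x e) ^ 2 + (x f) ^ 2) := by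
          linear_combination hA - hC - g 2 * htriy + g 2 * htriy'
        exact mul_left_cancel₀ hg1 h
      have h1' : x a + x b + x c + (x d + x e + x f) = 0 := by
        have h := hsplit x; rw [hs1] at h; linear_combination -h
      have h3' : (x a) ^ 3 + (x b) ^ 3 + (x c) ^ 3 +
          ((x d) ^ 3 + (x e) ^ 3 + (x f) ^ 3) = 0 := by
        have h := hsplit (fun k => (x k) ^ 3); rw [hs3] at h; linear_combination -h
      have hkey := key_cubic (x a) (x b) (x c) (x d) (x e) (x f)
        (by linear_combination h1') (by linear_combination h3') hsq
      -- the general contradiction step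
      have final : ∀ j : Fin 6, j ∈ A₀ᶜ → x j = -x a → False := by
        intro j hj hxj
        have hja : j ≠ b := fun h => (Finset.mem_compl.1 hj) (h ▸ hmemA.2.1)
        have hjc : j ≠ c := fun h => (Finset.mem_compl.1 hj) (h ▸ hmemA.2.2)
        set A : Finset (Fin 6) := {j, b, c} with hAdef
        have hcardA : A.card = 3 := by
          rw [hAdef, Finset.card_insert_of_notMem (by simp [hja, hjc]),
            Finset.card_insert_of_notMem (by simp [hbc]), Finset.card_singleton]
        have hyj : y j = y a := by
          have h : g 2 * y j = g 2 * y a := by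
            linear_combination hpt j - hpt a + (-(g 1) * (x j - x a)) * hxj
          exact mul_left_cancel₀ hg2 h
        have hepsy : ∑ k, eps A k * y k = 0 := by
          rw [eps_sum_eq A y, hsum, hAdef, sum_triple hja hjc hbc]
          rw [hyj]
          linear_combination 2 * htriy
        rcases huniq A hcardA hepsy with h | h
        · apply Finset.mem_compl.1 hj
          rw [← h, hAdef]; simp
        · have hb : b ∈ A := by rw [hAdef]; simp
          rw [h] at hb
          exact Finset.mem_compl.1 hb hmemA.2.1
      rcases mul_eq_zero.1 hkey with h | h
      · rcases mul_eq_zero.1 h with h | h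
        · exact final d hmemC.1 (by linear_combination h)
        · exact final e hmemC.2.1 (by linear_combination h)
      · exact final f hmemC.2.2 (by linear_combination h)
  · rintro rfl
    refine ⟨eps A₀, eps_ne_zero A₀, rfl, ?_, ?_, ?_, ?_⟩
    · rw [sum_eps, hA₀]; norm_num
    · have h : ∀ k, (eps A₀ k) ^ 3 = eps A₀ k := by
        intro k; simp only [eps]; split <;> ring
      rw [Finset.sum_congr rfl fun k _ => h k, sum_eps, hA₀]; norm_num
    · rw [← hA₀y]
      exact Finset.sum_congr rfl fun k _ => mul_comm _ _
    · rw [Fintype.not_linearIndependent_iff]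
      refine ⟨![1, -1, 0], ?_, 0, by norm_num⟩
      rw [Fin.sum_univ_three]
      funext k
      have h : (eps A₀ k) ^ 2 = 1 := by simp only [eps]; split <;> ring
      simp [h]
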